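/- arXiv:1809.04714 — 2 statements merged into one kernel-verified Lean document; each statement's English description precedes it below -/
import Mathlib

section
/- Let t ≥ 1, let p be a natural number, let n₁,…,n_t and d₁,…,d_t be natural numbers with dᵢ ≥ 1 for every i, let s be the number of indices i with nᵢ = 1, and assume Σᵢ dᵢ ≥ 2t + 1 + s. Then there is no tuple (q₁,…,q_t) of natural numbers with Σᵢ qᵢ = p such that for every i, setting (as integers) α = qᵢ, β = nᵢ − p, and γ = nᵢ + 2 − (p+1)dᵢ, at least one of the following holds: (1) α = 0 and either γ > β ≥ 0 or γ = β = 0; (2) 1 ≤ α ≤ nᵢ and α = β and γ = 0; (3) α = nᵢ + 1 and β ≥ 0 and either β − γ > nᵢ + 1 or (β = nᵢ + 1 and γ = 0). -/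
/-- The combinatorial core of statement `D(p)`: under the degree condition
`∑ dᵢ ≥ 2t + 1 + s`, no tuple `(q₁, …, q_t)` of naturals summing to `p` can satisfy,
for every `i`, one of the three nonvanishing cases of the Bott formula for
`H^{qᵢ}(ℙ^{nᵢ+1}, Ω^{nᵢ−p}(nᵢ+2−(p+1)dᵢ))`. -/
theorem stmt_0 (t : ℕ) (ht : 1 ≤ t) (p : ℕ) (n d : Fin t → ℕ)
    (hd : ∀ i, 1 ≤ d i)
    (s : ℕ) (hs : s = (Finset.univ.filter fun i => n i = 1).card)
    (hsum : 2 * t + 1 + s ≤ ∑ i, d i) :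
    ¬ ∃ q : Fin t → ℕ, (∑ i, q i = p) ∧ ∀ i,
      ((q i : ℤ) = 0 ∧
        (((n i : ℤ) + 2 - (p + 1) * d i > (n i : ℤ) - p ∧ (n i : ℤ) - p ≥ 0) ∨
          ((n i : ℤ) + 2 - (p + 1) * d i = (n i : ℤ) - p ∧ (n i : ℤ) - p = 0))) ∨
      (1 ≤ (q i : ℤ) ∧ (q i : ℤ) ≤ (n i : ℤ) ∧ (q i : ℤ) = (n i : ℤ) - p ∧
        (n i : ℤ) + 2 - (p + 1) * d i = 0) ∨
      ((q i : ℤ) = (n i : ℤ) + 1 ∧ (n i : ℤ) - p ≥ 0 ∧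
        (((n i : ℤ) - p) - ((n i : ℤ) + 2 - (p + 1) * d i) > (n i : ℤ) + 1 ∨
          ((n i : ℤ) - p = (n i : ℤ) + 1 ∧ (n i : ℤ) + 2 - (p + 1) * d i = 0))) := by
  rintro ⟨q, hq, h⟩
  have key : ∀ i, d i ≤ 2 := by
    intro i
    have hqp : q i ≤ p := hq ▸ Finset.single_le_sum (fun j _ => Nat.zero_le _) (Finset.mem_univ i)
    by_contra hd3
    push_neg at hd3
    have h3 : (3 : ℤ) ≤ (d i : ℤ) := by exact_mod_cast hd3
    have hp0 : (0 : ℤ) ≤ (p : ℤ) := Int.natCast_nonneg p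
    have hm : ((p : ℤ) + 1) * 3 ≤ ((p : ℤ) + 1) * (d i : ℤ) :=
      mul_le_mul_of_nonneg_left h3 (by linarith)
    have hqpz : (q i : ℤ) ≤ (p : ℤ) := by exact_mod_cast hqp
    rcases h i with ⟨h1, ⟨ha, hb⟩ | ⟨ha, hb⟩⟩ | ⟨h1, h2, h3', h4⟩ | ⟨h1, h2, ha | ⟨ha, hb⟩⟩ <;>
      linarith
  have hle : ∑ i, d i ≤ 2 * t := by
    calc ∑ i, d i ≤ ∑ _i : Fin t, 2 := Finset.sum_le_sum (fun i _ => key i)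
    _ = 2 * t := by simp [Finset.sum_const, Finset.card_univ, Nat.mul_comm]
  omega
end

section
/- Let J₁,…,J_a be pairwise distinct points of ℙ¹×ℙ¹ lying in the affine chart z₁ ≠ 0, y₁ ≠ 0, let r₁,…,r_a be positive integers, and let m₁, m₂ be natural numbers with m₁ ≥ (Σⱼ rⱼ) − 1 and m₂ ≥ (Σⱼ rⱼ) − 1. Then the ℂ-vector space N(m; r₁J₁,…,r_aJ_a) of bihomogeneous forms of bidegree (m₁,m₂) having multiplicity at least rⱼ at Jⱼ for every j has dimension exactly (m₁+1)(m₂+1) − Σⱼ rⱼ(rⱼ+1)/2. -/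
noncomputable section
open MvPolynomial

/-- `F ∈ ℂ[z₀,z₁,y₀,y₁]` (variables indexed `0,1,2,3`) is bihomogeneous of bidegree
`(m₁, m₂)`: every monomial has total degree `m₁` in `z₀,z₁` and `m₂` in `y₀,y₁`. -/
def IsBihom (m₁ m₂ : ℕ) (F : MvPolynomial (Fin 4) ℂ) : Prop :=
  ∀ d ∈ F.support, d 0 + d 1 = m₁ ∧ d 2 + d 3 = m₂

/-- The dehomogenization of `F` recentered at the point `J = (s, u)` of the affine
chart `z₁ ≠ 0, y₁ ≠ 0`: the polynomial `g(z, y) = F(z + s, 1, y + u, 1)`. -/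
def shiftAt (J : ℂ × ℂ) (F : MvPolynomial (Fin 4) ℂ) : MvPolynomial (Fin 2) ℂ :=
  aeval ![X 0 + C J.1, 1, X 1 + C J.2, 1] F

/-- `F` has multiplicity at least `r` at the point `J` of the affine chart
`z₁ ≠ 0, y₁ ≠ 0`: every monomial of `g(z, y) = F(z + s, 1, y + u, 1)` has total
degree at least `r`. -/
def MultAtLeast (r : ℕ) (J : ℂ × ℂ) (F : MvPolynomial (Fin 4) ℂ) : Prop :=
  ∀ d ∈ (shiftAt J F).support, r ≤ d 0 + d 1

/-- The space `N(m; r₁J₁, …, r_aJ_a)` of bihomogeneous forms of bidegree `(m₁, m₂)`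
with multiplicity at least `rⱼ` at `Jⱼ` for every `j`, as a `ℂ`-subspace of
`ℂ[z₀,z₁,y₀,y₁]`. -/
def formSpace (m₁ m₂ : ℕ) {a : ℕ} (r : Fin a → ℕ) (J : Fin a → ℂ × ℂ) :
    Submodule ℂ (MvPolynomial (Fin 4) ℂ) where
  carrier := {F | IsBihom m₁ m₂ F ∧ ∀ j, MultAtLeast (r j) (J j) F}
  zero_mem' := by
    constructor
    · intro d hd
      simp [MvPolynomial.support_zero] at hd
    · intro j d hd
      simp [MultAtLeast, shiftAt] at hd
  add_mem' := by
    rintro F G ⟨hF₁, hF₂⟩ ⟨hG₁, hG₂⟩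
    constructor
    · intro d hd
      rcases Finset.mem_union.mp (MvPolynomial.support_add hd) with h | h
      · exact hF₁ d h
      · exact hG₁ d h
    · intro j d hd
      rw [show shiftAt (J j) (F + G) = shiftAt (J j) F + shiftAt (J j) G from
        map_add _ _ _] at hd
      rcases Finset.mem_union.mp (MvPolynomial.support_add hd) with h | h
      · exact hF₂ j d h
      · exact hG₂ j d h
  smul_mem' := by
    rintro c F ⟨hF₁, hF₂⟩
    constructor
    · intro d hd
      exact hF₁ d (MvPolynomial.support_smul hd)
    · intro j d hd
      rw [show shiftAt (J j) (c • F) = c • shiftAt (J j) F from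
        map_smul (aeval _).toLinearMap _ _] at hd
      exact hF₂ j d (MvPolynomial.support_smul hd)



namespace Stmt6Aux

/-- index set of jet conditions of order `r`. -/
abbrev S (r : ℕ) := {p : Fin r × Fin r // p.1.1 + p.2.1 < r}

lemma card_S (r : ℕ) : Fintype.card (S r) = r * (r + 1) / 2 := by
  have e1 : S r ≃ Σ i : Fin r, {k : Fin r // i.1 + k.1 < r} :=
    Equiv.subtypeProdEquivSigmaSubtype (fun (i : Fin r) (k : Fin r) => i.1 + k.1 < r)
  have e2 : ∀ i : Fin r, {k : Fin r // i.1 + k.1 < r} ≃ Fin (r - i.1) := by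
    intro i
    exact
      { toFun := fun k => ⟨k.1.1, by omega⟩
        invFun := fun j => ⟨⟨j.1, by have := j.2; omega⟩, by have := j.2; have := i.2; simp; omega⟩
        left_inv := fun k => by ext; rfl
        right_inv := fun j => rfl }
  rw [Fintype.card_congr e1, Fintype.card_sigma]
  have : ∀ i : Fin r, Fintype.card {k : Fin r // i.1 + k.1 < r} = r - i.1 := fun i => by
    rw [Fintype.card_congr (e2 i), Fintype.card_fin]
  simp only [this]
  rw [Fin.sum_univ_eq_sum_range]
  have key : ∑ i ∈ Finset.range r, (r - i) = ∑ i ∈ Finset.range (r + 1), i := by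
    rw [Finset.sum_range_succ', ← Finset.sum_range_reflect (fun i => i + 1) r]
    simp only [add_zero]
    exact Finset.sum_congr rfl fun i hi => by
      simp only [Finset.mem_range] at hi; omega
  have h2 := Finset.sum_range_id_mul_two (r + 1)
  simp only [Nat.add_sub_cancel] at h2
  rw [key]
  rw [Nat.mul_comm (r + 1) r] at h2
  omega

/-- exponent finsupp on two variables. -/
def D (p : ℕ × ℕ) : Fin 2 →₀ ℕ := Finsupp.equivFunOnFinite.symm ![p.1, p.2]

@[simp] lemma D_apply0 (p : ℕ × ℕ) : D p 0 = p.1 := rfl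
@[simp] lemma D_apply1 (p : ℕ × ℕ) : D p 1 = p.2 := rfl

lemma D_eq_iff {p q : ℕ × ℕ} : D p = D q ↔ p = q := by
  constructor
  · intro h
    have h0 := congrArg (fun f => f 0) h
    have h1 := congrArg (fun f => f 1) h
    simp at h0 h1
    exact Prod.ext h0 h1
  · rintro rfl; rfl

lemma eq_D (d : Fin 2 →₀ ℕ) : d = D (d 0, d 1) := by
  ext x
  fin_cases x <;> rfl

lemma D_le_iff {p q : ℕ × ℕ} : D p ≤ D q ↔ p.1 ≤ q.1 ∧ p.2 ≤ q.2 := by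
  constructor
  · intro h; exact ⟨h 0, h 1⟩
  · rintro ⟨h1, h2⟩ x
    fin_cases x <;> simpa


variable (m₁ m₂ : ℕ)

/-- exponent of the bihomogeneous monomial indexed by `(i,k)`. -/
def E (ik : Fin (m₁ + 1) × Fin (m₂ + 1)) : Fin 4 →₀ ℕ :=
  Finsupp.equivFunOnFinite.symm ![ik.1.1, m₁ - ik.1.1, ik.2.1, m₂ - ik.2.1]

@[simp] lemma E_apply0 (ik) : E m₁ m₂ ik 0 = ik.1.1 := rfl
@[simp] lemma E_apply1 (ik) : E m₁ m₂ ik 1 = m₁ - ik.1.1 := rfl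
@[simp] lemma E_apply2 (ik) : E m₁ m₂ ik 2 = ik.2.1 := rfl
@[simp] lemma E_apply3 (ik) : E m₁ m₂ ik 3 = m₂ - ik.2.1 := rfl

lemma E_injective : Function.Injective (E m₁ m₂) := by
  intro ik ik' h
  have h0 := congrArg (fun f => f 0) h
  have h2 := congrArg (fun f => f 2) h
  simp only [E_apply0, E_apply2] at h0 h2
  exact Prod.ext (Fin.ext h0) (Fin.ext h2)

/-- the homogenization linear map from coefficient vectors to bihomogeneous forms. -/
def Φ : ((Fin (m₁ + 1) × Fin (m₂ + 1)) → ℂ) →ₗ[ℂ] MvPolynomial (Fin 4) ℂ where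
  toFun v := ∑ ik, monomial (E m₁ m₂ ik) (v ik)
  map_add' v w := by simp [map_add, Finset.sum_add_distrib]
  map_smul' c v := by
    simp only [Pi.smul_apply, smul_eq_mul, RingHom.id_apply, Finset.smul_sum]
    exact Finset.sum_congr rfl fun ik _ => by rw [smul_monomial, smul_eq_mul]

lemma coeff_Φ (v) (ik) : coeff (E m₁ m₂ ik) (Φ m₁ m₂ v) = v ik := by
  show coeff _ (∑ ik', monomial (E m₁ m₂ ik') (v ik')) = _
  rw [coeff_sum]
  rw [Finset.sum_eq_single ik]
  · simp [coeff_monomial]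
  · intro b _ hb
    rw [coeff_monomial, if_neg (fun h => hb (E_injective m₁ m₂ h))]
  · simp

lemma Φ_injective : Function.Injective (Φ m₁ m₂) := by
  intro v w h
  funext ik
  rw [← coeff_Φ m₁ m₂ v ik, ← coeff_Φ m₁ m₂ w ik, h]

lemma support_Φ (v) : (Φ m₁ m₂ v).support ⊆ Finset.univ.image (E m₁ m₂) := by
  intro d hd
  show d ∈ _
  by_contra hcon
  have : coeff d (Φ m₁ m₂ v) = 0 := by
    show coeff _ (∑ ik', monomial (E m₁ m₂ ik') (v ik')) = _
    rw [coeff_sum]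
    refine Finset.sum_eq_zero fun ik' _ => ?_
    rw [coeff_monomial, if_neg]
    intro h
    exact hcon (Finset.mem_image.mpr ⟨ik', Finset.mem_univ _, h⟩)
  exact (MvPolynomial.mem_support_iff.mp hd) this

lemma isBihom_Φ (v) : IsBihom m₁ m₂ (Φ m₁ m₂ v) := by
  intro d hd
  obtain ⟨ik, _, rfl⟩ := Finset.mem_image.mp (support_Φ m₁ m₂ v hd)
  have h1 := ik.1.2
  have h2 := ik.2.2
  constructor
  · simp only [E_apply0, E_apply1]; omega
  · simp only [E_apply2, E_apply3]; omega

/-- recentering (translation) on two-variable polynomials. -/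
def τ (c : ℂ × ℂ) : MvPolynomial (Fin 2) ℂ →ₐ[ℂ] MvPolynomial (Fin 2) ℂ :=
  aeval ![X 0 + C c.1, X 1 + C c.2]

/-- dehomogenization of a coefficient vector: the 2-variable polynomial. -/
def ιm (v : (Fin (m₁ + 1) × Fin (m₂ + 1)) → ℂ) : MvPolynomial (Fin 2) ℂ :=
  ∑ ik, monomial (D (ik.1.1, ik.2.1)) (v ik)

lemma shiftAt_Φ (c : ℂ × ℂ) (v) : shiftAt c (Φ m₁ m₂ v) = τ c (ιm m₁ m₂ v) := by
  show aeval _ (∑ ik, monomial (E m₁ m₂ ik) (v ik)) =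
    aeval _ (∑ ik, monomial (D (ik.1.1, ik.2.1)) (v ik))
  rw [map_sum, map_sum]
  refine Finset.sum_congr rfl fun ik _ => ?_
  rw [aeval_monomial, aeval_monomial]
  rw [Finsupp.prod_fintype _ _ (fun _ => pow_zero _),
    Finsupp.prod_fintype _ _ (fun _ => pow_zero _)]
  rw [Fin.prod_univ_four, Fin.prod_univ_two]
  simp [E, D]


variable {a : ℕ} (r : Fin a → ℕ) (J : Fin a → ℂ × ℂ)

/-- the index type for all jet conditions. -/
abbrev Idx (r : Fin a → ℕ) := Σ j : Fin a, S (r j)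

/-- the weight (total degree) of a jet index. -/
def wt (idx : Idx r) : ℕ := idx.2.1.1.1 + idx.2.1.2.1

/-- the linear map sending a coefficient vector to all its jets at the points `J j`. -/
def L : ((Fin (m₁ + 1) × Fin (m₂ + 1)) → ℂ) →ₗ[ℂ] (Idx r → ℂ) :=
  LinearMap.pi fun idx => (lcoeff ℂ (D (idx.2.1.1.1, idx.2.1.2.1))).comp
    (((aeval ![X 0 + C (J idx.1).1, 1, X 1 + C (J idx.1).2, 1]).toLinearMap).comp (Φ m₁ m₂))

lemma L_apply (v) (idx : Idx r) :
    L m₁ m₂ r J v idx = coeff (D (idx.2.1.1.1, idx.2.1.2.1)) (shiftAt (J idx.1) (Φ m₁ m₂ v)) :=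
  rfl

lemma mem_ker_iff (v) :
    v ∈ LinearMap.ker (L m₁ m₂ r J) ↔ ∀ j, MultAtLeast (r j) (J j) (Φ m₁ m₂ v) := by
  rw [LinearMap.mem_ker]
  constructor
  · intro hv j d hd
    by_contra hcon
    push_neg at hcon
    have h0 : d 0 < r j := by omega
    have h1 : d 1 < r j := by omega
    have := congrFun hv ⟨j, ⟨(⟨d 0, h0⟩, ⟨d 1, h1⟩), by simpa using hcon⟩⟩
    rw [L_apply] at this
    simp only [Pi.zero_apply] at this
    rw [← eq_D d] at this
    exact (MvPolynomial.mem_support_iff.mp hd) this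
  · intro h
    funext idx
    obtain ⟨j, ⟨⟨p1, p2⟩, hp⟩⟩ := idx
    rw [L_apply]
    simp only [Pi.zero_apply]
    by_contra hcon
    have hmem : D (p1.1, p2.1) ∈ (shiftAt (J j) (Φ m₁ m₂ v)).support :=
      MvPolynomial.mem_support_iff.mpr hcon
    have := h j _ hmem
    simp only [D_apply0, D_apply1] at this
    have hp' : p1.1 + p2.1 < r j := hp
    omega

lemma formSpace_eq :
    formSpace m₁ m₂ r J = Submodule.map (Φ m₁ m₂) (LinearMap.ker (L m₁ m₂ r J)) := by
  apply le_antisymm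
  · intro F hF
    obtain ⟨hbi, hmult⟩ := hF
    set v : (Fin (m₁ + 1) × Fin (m₂ + 1)) → ℂ := fun ik => coeff (E m₁ m₂ ik) F with hv
    have hΦv : Φ m₁ m₂ v = F := by
      apply MvPolynomial.ext
      intro d
      by_cases hd : ∃ ik, E m₁ m₂ ik = d
      · obtain ⟨ik, rfl⟩ := hd
        rw [coeff_Φ]
      · have hz : coeff d (Φ m₁ m₂ v) = 0 := by
          rw [← MvPolynomial.notMem_support_iff]
          intro hmem
          obtain ⟨ik, _, hik⟩ := Finset.mem_image.mp (support_Φ m₁ m₂ v hmem)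
          exact hd ⟨ik, hik⟩
        rw [hz]
        rw [eq_comm, ← MvPolynomial.notMem_support_iff]
        intro hmem
        obtain ⟨h01, h23⟩ := hbi d hmem
        refine hd ⟨(⟨d 0, by omega⟩, ⟨d 2, by omega⟩), ?_⟩
        ext x
        fin_cases x <;> simp <;> omega
    refine ⟨v, ?_, hΦv⟩
    show v ∈ LinearMap.ker (L m₁ m₂ r J)
    rw [mem_ker_iff, hΦv]
    exact hmult
  · rintro F ⟨v, hv, rfl⟩
    exact ⟨isBihom_Φ m₁ m₂ v, (mem_ker_iff m₁ m₂ r J v).mp hv⟩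

lemma finrank_formSpace_eq_ker :
    Module.finrank ℂ (formSpace m₁ m₂ r J) =
      Module.finrank ℂ (LinearMap.ker (L m₁ m₂ r J)) := by
  rw [formSpace_eq m₁ m₂ r J]
  exact (LinearEquiv.finrank_eq
    (Submodule.equivMapOfInjective _ (Φ_injective m₁ m₂) _)).symm


/-- a linear form vanishing at `J i` but not at `J j` (for `i ≠ j`). -/
def ℓ (j i : Fin a) : MvPolynomial (Fin 2) ℂ :=
  if (J i).1 ≠ (J j).1 then X 0 - C (J i).1 else X 1 - C (J i).2

/-- product of linear forms vanishing to order `r i` at each `J i`, `i ≠ j`. -/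
def Q (j : Fin a) : MvPolynomial (Fin 2) ℂ :=
  ∏ i ∈ Finset.univ.erase j, (ℓ J j i) ^ (r i)

/-- the interpolation polynomial attached to a jet index. -/
def P (idx : Idx r) : MvPolynomial (Fin 2) ℂ :=
  (X 0 - C (J idx.1).1) ^ (idx.2.1.1.1) * (X 1 - C (J idx.1).2) ^ (idx.2.1.2.1)
    * Q r J idx.1

lemma degreeOf_ℓ_le (j i : Fin a) (n : Fin 2) : degreeOf n (ℓ J j i) ≤ 1 := by
  have key : ∀ (k : Fin 2) (c : ℂ), degreeOf n (X k - C c) ≤ 1 := by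
    intro k c
    rw [sub_eq_add_neg, ← C_neg]
    refine le_trans (degreeOf_add_le _ _ _) ?_
    rw [degreeOf_C]
    rw [degreeOf_X]
    split_ifs <;> omega
  rw [ℓ]
  split_ifs <;> apply key

lemma degreeOf_Q_le (j : Fin a) (n : Fin 2) :
    degreeOf n (Q r J j) ≤ ∑ i ∈ Finset.univ.erase j, r i := by
  refine le_trans (degreeOf_prod_le _ _ _) (Finset.sum_le_sum fun i _ => ?_)
  refine le_trans (degreeOf_pow_le _ _ _) ?_
  have := degreeOf_ℓ_le J j i n
  calc r i * degreeOf n (ℓ J j i) ≤ r i * 1 := Nat.mul_le_mul_left _ this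
    _ = r i := by omega

lemma degreeOf_P_le (idx : Idx r) (n : Fin 2) :
    degreeOf n (P r J idx) ≤ wt r idx + ∑ i ∈ Finset.univ.erase idx.1, r i := by
  rw [P]
  refine le_trans (degreeOf_mul_le _ _ _) ?_
  refine Nat.add_le_add ?_ (degreeOf_Q_le r J idx.1 n)
  refine le_trans (degreeOf_mul_le _ _ _) ?_
  rw [wt]
  have k1 : degreeOf n ((X 0 - C (J idx.1).1) ^ idx.2.1.1.1) ≤ idx.2.1.1.1 := by
    refine le_trans (degreeOf_pow_le _ _ _) ?_
    have : degreeOf n (X (0 : Fin 2) - C (J idx.1).1) ≤ 1 := by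
      rw [sub_eq_add_neg, ← C_neg]
      refine le_trans (degreeOf_add_le _ _ _) ?_
      rw [degreeOf_C, degreeOf_X]
      split_ifs <;> omega
    calc idx.2.1.1.1 * degreeOf n (X (0:Fin 2) - C (J idx.1).1)
        ≤ idx.2.1.1.1 * 1 := Nat.mul_le_mul_left _ this
      _ = idx.2.1.1.1 := by omega
  have k2 : degreeOf n ((X 1 - C (J idx.1).2) ^ idx.2.1.2.1) ≤ idx.2.1.2.1 := by
    refine le_trans (degreeOf_pow_le _ _ _) ?_
    have : degreeOf n (X (1 : Fin 2) - C (J idx.1).2) ≤ 1 := by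
      rw [sub_eq_add_neg, ← C_neg]
      refine le_trans (degreeOf_add_le _ _ _) ?_
      rw [degreeOf_C, degreeOf_X]
      split_ifs <;> omega
    calc idx.2.1.2.1 * degreeOf n (X (1:Fin 2) - C (J idx.1).2)
        ≤ idx.2.1.2.1 * 1 := Nat.mul_le_mul_left _ this
      _ = idx.2.1.2.1 := by omega
  omega


lemma monomial_D (p : ℕ × ℕ) : monomial (D p) (1 : ℂ) = X 0 ^ p.1 * X 1 ^ p.2 := by
  rw [monomial_eq, Finsupp.prod_fintype _ _ (fun _ => pow_zero _), Fin.prod_univ_two]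
  simp [D]

lemma τ_X0_sub_C (c : ℂ × ℂ) (e : ℂ) : τ c (X 0 - C e) = X 0 + C (c.1 - e) := by
  rw [τ, map_sub, aeval_X, aeval_C]
  simp [Matrix.cons_val_zero, algebraMap_eq, C_sub]
  ring

lemma τ_X1_sub_C (c : ℂ × ℂ) (e : ℂ) : τ c (X 1 - C e) = X 1 + C (c.2 - e) := by
  rw [τ, map_sub, aeval_X, aeval_C]
  simp [algebraMap_eq, C_sub]
  ring

lemma constantCoeff_X_add_C (k : Fin 2) (e : ℂ) :
    constantCoeff (X k + C e) = e := by
  rw [map_add, constantCoeff_X, constantCoeff_C, zero_add]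

lemma constantCoeff_τ_ℓ_ne (hJ : Function.Injective J) (j i : Fin a) (hij : i ≠ j) :
    constantCoeff (τ (J j) (ℓ J j i)) ≠ 0 := by
  rw [ℓ]
  split_ifs with h
  · rw [τ_X0_sub_C, constantCoeff_X_add_C]
    exact sub_ne_zero.mpr (Ne.symm h)
  · push_neg at h
    have hne : (J i).2 ≠ (J j).2 := by
      intro h2
      exact hij (hJ (Prod.ext h h2))
    rw [τ_X1_sub_C, constantCoeff_X_add_C]
    exact sub_ne_zero.mpr (Ne.symm hne)

lemma cst_ne (hJ : Function.Injective J) (j : Fin a) :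
    constantCoeff (τ (J j) (Q r J j)) ≠ 0 := by
  rw [Q, map_prod, map_prod]
  rw [Finset.prod_ne_zero_iff]
  intro i hi
  rw [map_pow, map_pow]
  exact pow_ne_zero _ (constantCoeff_τ_ℓ_ne J hJ j i (Finset.ne_of_mem_erase hi))

lemma coeff_τ_P_self (idx : Idx r) (q : ℕ × ℕ) (hwt : q.1 + q.2 ≤ wt r idx) :
    coeff (D q) (τ (J idx.1) (P r J idx)) =
      if q = (idx.2.1.1.1, idx.2.1.2.1) then constantCoeff (τ (J idx.1) (Q r J idx.1))
      else 0 := by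
  obtain ⟨j, ⟨⟨p1, p2⟩, hp⟩⟩ := idx
  have hp' : p1.1 + p2.1 < r j := hp
  have hτ : τ (J j) (P r J ⟨j, ⟨(p1, p2), hp⟩⟩) =
      τ (J j) (Q r J j) * monomial (D (p1.1, p2.1)) 1 := by
    rw [P, map_mul, map_mul, map_pow, map_pow, τ_X0_sub_C, τ_X1_sub_C]
    simp only [sub_self, map_zero, add_zero]
    rw [monomial_D]
    ring
  rw [hτ, coeff_mul_monomial']
  by_cases h : q = (p1.1, p2.1)
  · subst h
    rw [if_pos rfl, if_pos le_rfl, tsub_self, mul_one]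
    rfl
  · rw [if_neg h]
    rw [if_neg]
    intro hle
    obtain ⟨h1, h2⟩ := D_le_iff.mp hle
    simp only [wt] at hwt
    exact h (Prod.ext (by omega) (by omega))

lemma coeff_τ_P_other (idx : Idx r) (j' : Fin a) (hj' : j' ≠ idx.1) (q : ℕ × ℕ)
    (hq : q.1 + q.2 < r j') :
    coeff (D q) (τ (J j') (P r J idx)) = 0 := by
  have hmem : j' ∈ Finset.univ.erase idx.1 :=
    Finset.mem_erase.mpr ⟨hj', Finset.mem_univ _⟩
  have hdvd0 : (ℓ J idx.1 j') ^ (r j') ∣ Q r J idx.1 :=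
    Finset.dvd_prod_of_mem _ hmem
  have hdvd : τ (J j') ((ℓ J idx.1 j') ^ (r j')) ∣ τ (J j') (P r J idx) := by
    apply map_dvd
    exact Dvd.dvd.mul_left hdvd0 _
  have hXk : ∃ k : Fin 2, τ (J j') (ℓ J idx.1 j') = X k := by
    rw [ℓ]
    split_ifs with h
    · exact ⟨0, by rw [τ_X0_sub_C]; simp⟩
    · exact ⟨1, by rw [τ_X1_sub_C]; simp⟩
  obtain ⟨k, hk⟩ := hXk
  rw [map_pow, hk] at hdvd
  obtain ⟨g, hg⟩ := hdvd
  rw [hg, X_pow_eq_monomial, coeff_monomial_mul']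
  rw [if_neg]
  intro hle
  have := Finsupp.single_le_iff.mp hle
  have hDk : D q k ≤ q.1 + q.2 := by
    fin_cases k <;> simp <;> omega
  omega

/-- coefficient vector of the interpolation polynomial. -/
def vP (idx : Idx r) : (Fin (m₁ + 1) × Fin (m₂ + 1)) → ℂ :=
  fun ik => coeff (D (ik.1.1, ik.2.1)) (P r J idx)

lemma ιm_coeffs (g : MvPolynomial (Fin 2) ℂ)
    (hg : ∀ d ∈ g.support, d 0 ≤ m₁ ∧ d 1 ≤ m₂) :
    ιm m₁ m₂ (fun ik => coeff (D (ik.1.1, ik.2.1)) g) = g := by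
  apply MvPolynomial.ext
  intro d
  rw [ιm, coeff_sum]
  by_cases hd : ∃ ik : Fin (m₁ + 1) × Fin (m₂ + 1), D (ik.1.1, ik.2.1) = d
  · obtain ⟨ik, rfl⟩ := hd
    rw [Finset.sum_eq_single ik]
    · rw [coeff_monomial, if_pos rfl]
    · intro b _ hb
      rw [coeff_monomial, if_neg]
      intro hDb
      apply hb
      have := D_eq_iff.mp hDb
      exact Prod.ext (Fin.ext (congrArg Prod.fst this)) (Fin.ext (congrArg Prod.snd this))
    · simp
  · rw [Finset.sum_eq_zero, eq_comm, ← MvPolynomial.notMem_support_iff]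
    · intro hmem
      obtain ⟨h0, h1⟩ := hg d hmem
      refine hd ⟨(⟨d 0, by omega⟩, ⟨d 1, by omega⟩), ?_⟩
      exact (eq_D d).symm
    · intro ik _
      rw [coeff_monomial, if_neg]
      intro hDb
      exact hd ⟨ik, hDb⟩

lemma P_supp_bound (hr : ∀ j, 1 ≤ r j) (hm₁' : ∑ i, r i ≤ m₁ + 1) (hm₂' : ∑ i, r i ≤ m₂ + 1)
    (idx : Idx r) : ∀ d ∈ (P r J idx).support, d 0 ≤ m₁ ∧ d 1 ≤ m₂ := by
  intro d hd
  have hsum : ∑ i ∈ Finset.univ.erase idx.1, r i + r idx.1 = ∑ i, r i :=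
    Finset.sum_erase_add _ _ (Finset.mem_univ _)
  have hwt : wt r idx < r idx.1 := idx.2.2
  have h0 : d 0 ≤ degreeOf 0 (P r J idx) := degreeOf_le_iff.mp le_rfl d hd
  have h1 : d 1 ≤ degreeOf 1 (P r J idx) := degreeOf_le_iff.mp le_rfl d hd
  have b0 := degreeOf_P_le r J idx 0
  have b1 := degreeOf_P_le r J idx 1
  omega

lemma L_vP (hr : ∀ j, 1 ≤ r j) (hm₁' : ∑ i, r i ≤ m₁ + 1) (hm₂' : ∑ i, r i ≤ m₂ + 1)
    (idx idx' : Idx r) :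
    L m₁ m₂ r J (vP m₁ m₂ r J idx) idx' =
      coeff (D (idx'.2.1.1.1, idx'.2.1.2.1)) (τ (J idx'.1) (P r J idx)) := by
  rw [L_apply, shiftAt_Φ]
  unfold vP
  rw [ιm_coeffs m₁ m₂ (P r J idx) (P_supp_bound m₁ m₂ r J hr hm₁' hm₂' idx)]


/-- injective encoding of jet indices into a plain product. -/
def enc (idx : Idx r) : Fin a × ℕ × ℕ := (idx.1, idx.2.1.1.1, idx.2.1.2.1)

lemma enc_injective : Function.Injective (enc r) := by
  rintro ⟨j, ⟨⟨p1, p2⟩, hp⟩⟩ ⟨j', ⟨⟨q1, q2⟩, hq⟩⟩ h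
  simp only [enc, Prod.mk.injEq] at h
  obtain ⟨rfl, h2, h3⟩ := h
  exact congrArg (fun x : S (r j) => (⟨j, x⟩ : Idx r))
    (Subtype.ext (Prod.ext (Fin.ext h2) (Fin.ext h3)))

lemma single_mem_range (hJ : Function.Injective J) (hr : ∀ j, 1 ≤ r j)
    (hm₁' : ∑ i, r i ≤ m₁ + 1) (hm₂' : ∑ i, r i ≤ m₂ + 1) :
    ∀ n : ℕ, ∀ idx : Idx r, r idx.1 ≤ wt r idx + n →
      Pi.single idx (1 : ℂ) ∈ LinearMap.range (L m₁ m₂ r J) := by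
  intro n
  induction n with
  | zero =>
    intro idx hle
    have : wt r idx < r idx.1 := idx.2.2
    omega
  | succ n ih =>
    intro idx hle
    classical
    set v := vP m₁ m₂ r J idx with hv
    set c := constantCoeff (τ (J idx.1) (Q r J idx.1)) with hc
    have hcne : c ≠ 0 := cst_ne r J hJ idx.1
    set T : Finset (Idx r) :=
      Finset.univ.filter (fun idx' => idx'.1 = idx.1 ∧ wt r idx + 1 ≤ wt r idx') with hT
    set Sm : Idx r → ℂ :=
      ∑ idx' ∈ T, (L m₁ m₂ r J v idx') • (Pi.single idx' 1 : Idx r → ℂ) with hSm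
    have key : L m₁ m₂ r J v = c • (Pi.single idx 1 : Idx r → ℂ) + Sm := by
      rw [hSm]
      funext idx''
      simp only [Pi.add_apply, Pi.smul_apply, Finset.sum_apply, Pi.single_apply,
        smul_eq_mul, mul_ite, mul_one, mul_zero]
      rw [Finset.sum_ite_eq T idx'' (fun idx' => L m₁ m₂ r J v idx')]
      rw [hv, L_vP m₁ m₂ r J hr hm₁' hm₂']
      by_cases h1 : idx''.1 = idx.1
      · by_cases h2 : wt r idx + 1 ≤ wt r idx''
        · have hT'' : idx'' ∈ T := by
            rw [hT, Finset.mem_filter]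
            exact ⟨Finset.mem_univ _, h1, h2⟩
          have hne : idx'' ≠ idx := by
            intro h
            rw [h] at h2
            omega
          rw [if_pos hT'', if_neg hne, zero_add]
        · have hT'' : idx'' ∉ T := by
            rw [hT, Finset.mem_filter]
            push_neg
            intro _ _
            omega
          rw [if_neg hT'', add_zero]
          have hJeq : J idx''.1 = J idx.1 := by rw [h1]
          rw [hJeq]
          have hwt : idx''.2.1.1.1 + idx''.2.1.2.1 ≤ wt r idx := by
            simp only [wt] at h2 ⊢
            omega
          rw [coeff_τ_P_self r J idx _ hwt]
          by_cases heq : idx'' = idx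
          · rw [if_pos heq, if_pos (by rw [← heq])]
          · rw [if_neg heq, if_neg]
            intro hq
            exact heq (enc_injective r (Prod.ext h1 hq))
      · have hT'' : idx'' ∉ T := by
          rw [hT, Finset.mem_filter]
          push_neg
          intro _ h
          exact absurd h h1
        have hne : idx'' ≠ idx := fun h => h1 (by rw [h])
        rw [if_neg hT'', if_neg hne, add_zero]
        exact coeff_τ_P_other r J idx idx''.1 h1 _ (by
          have := idx''.2.2
          simpa [wt] using this)
    have hrange : ∀ idx' ∈ T, Pi.single idx' (1 : ℂ) ∈ LinearMap.range (L m₁ m₂ r J) := by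
      intro idx' hidx'
      rw [hT, Finset.mem_filter] at hidx'
      obtain ⟨_, hj, hw⟩ := hidx'
      apply ih
      rw [hj]
      omega
    have heq : Pi.single idx (1 : ℂ) = c⁻¹ • (L m₁ m₂ r J v - Sm) := by
      rw [key, add_sub_cancel_right, smul_smul, inv_mul_cancel₀ hcne, one_smul]
    rw [heq]
    refine Submodule.smul_mem _ _ (Submodule.sub_mem _ (LinearMap.mem_range_self _ _) ?_)
    rw [hSm]
    exact Submodule.sum_mem _ fun idx' hidx' =>
      Submodule.smul_mem _ _ (hrange idx' hidx')

lemma L_surjective (hJ : Function.Injective J) (hr : ∀ j, 1 ≤ r j)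
    (hm₁' : ∑ i, r i ≤ m₁ + 1) (hm₂' : ∑ i, r i ≤ m₂ + 1) :
    LinearMap.range (L m₁ m₂ r J) = ⊤ := by
  rw [← top_le_iff]
  intro w _
  classical
  have hw : ∑ idx : Idx r, (w idx) • (Pi.single idx 1 : Idx r → ℂ) = w := by
    funext x
    rw [Finset.sum_apply]
    simp only [Pi.smul_apply, Pi.single_apply, smul_eq_mul, mul_ite, mul_one, mul_zero]
    rw [Finset.sum_ite_eq Finset.univ x w]
    simp
  rw [← hw]
  refine Submodule.sum_mem _ fun idx _ => Submodule.smul_mem _ _ ?_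
  exact single_mem_range m₁ m₂ r J hJ hr hm₁' hm₂' (r idx.1) idx (by omega)


lemma finrank_ker_eq (hJ : Function.Injective J) (hr : ∀ j, 1 ≤ r j)
    (hm₁' : ∑ i, r i ≤ m₁ + 1) (hm₂' : ∑ i, r i ≤ m₂ + 1) :
    Module.finrank ℂ (LinearMap.ker (L m₁ m₂ r J)) + Fintype.card (Idx r) =
      (m₁ + 1) * (m₂ + 1) := by
  have h := LinearMap.finrank_range_add_finrank_ker (L m₁ m₂ r J)
  rw [L_surjective m₁ m₂ r J hJ hr hm₁' hm₂', finrank_top,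
    Module.finrank_fintype_fun_eq_card, Module.finrank_fintype_fun_eq_card] at h
  rw [Nat.add_comm] at h
  rw [h, Fintype.card_prod, Fintype.card_fin, Fintype.card_fin]

lemma card_Idx : Fintype.card (Idx r) = ∑ j, r j * (r j + 1) / 2 := by
  rw [Fintype.card_sigma]
  exact Finset.sum_congr rfl fun j _ => card_S (r j)

end Stmt6Aux

/-- Proposition on dimension (equality part): when `m₁, m₂ ≥ (∑ⱼ rⱼ) − 1`, the space
`N(m; r₁J₁, …, r_aJ_a)` of bihomogeneous bidegree-`(m₁,m₂)` forms with multiplicity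
at least `rⱼ` at the pairwise distinct points `Jⱼ` has dimension exactly
`(m₁+1)(m₂+1) − ∑ⱼ rⱼ(rⱼ+1)/2`. -/
theorem stmt_6 (a : ℕ) (J : Fin a → ℂ × ℂ) (hJ : Function.Injective J)
    (r : Fin a → ℕ) (hr : ∀ j, 1 ≤ r j) (m₁ m₂ : ℕ)
    (hm₁ : (∑ j, (r j : ℤ)) - 1 ≤ (m₁ : ℤ)) (hm₂ : (∑ j, (r j : ℤ)) - 1 ≤ (m₂ : ℤ)) :
    (Module.finrank ℂ (formSpace m₁ m₂ r J) : ℤ) =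
      ((m₁ + 1) * (m₂ + 1) : ℤ) - ∑ j, ((r j : ℤ) * ((r j : ℤ) + 1)) / 2 := by
  open Stmt6Aux in
  have hs : ((∑ i, r i : ℕ) : ℤ) = ∑ i, (r i : ℤ) := by push_cast; rfl
  have hm₁' : ∑ i, r i ≤ m₁ + 1 := by
    have h2 : ((∑ i, r i : ℕ) : ℤ) ≤ (m₁ : ℤ) + 1 := by rw [hs]; omega
    exact_mod_cast h2
  have hm₂' : ∑ i, r i ≤ m₂ + 1 := by
    have h2 : ((∑ i, r i : ℕ) : ℤ) ≤ (m₂ : ℤ) + 1 := by rw [hs]; omega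
    exact_mod_cast h2
  rw [Stmt6Aux.finrank_formSpace_eq_ker m₁ m₂ r J]
  have hkey := Stmt6Aux.finrank_ker_eq m₁ m₂ r J hJ hr hm₁' hm₂'
  rw [Stmt6Aux.card_Idx r] at hkey
  have hterm : ∀ j : Fin a, ((r j : ℤ) * ((r j : ℤ) + 1)) / 2 = ((r j * (r j + 1) / 2 : ℕ) : ℤ) :=
    fun j => by rw [Int.natCast_div]; push_cast; ring_nf
  rw [Finset.sum_congr rfl (fun j _ => hterm j), ← Nat.cast_sum]
  zify at hkey
  rw [Finset.sum_congr rfl (fun j _ => hterm j), ← Nat.cast_sum] at hkey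
  linarith [hkey]

end
end
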